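/- Forwarding lemma: let G be a graph, β ≥ 1, S ⊆ V, and u ∈ S with deg_G(u) ≥ β+1. If σ_{S,β}(u) > ℓ_β(u) (in particular ℓ_β(u) ≠ ∞), then there exists a node w ∈ F(σ_{S,β}, u) ∩ D(ℓ_β, u) with σ_{S,β}(w) > ℓ_β(w). -/

import Mathlib

open Classical

variable {V : Type*}

/-- `G` has arboricity at most `a`: every subgraph `H` with at least `2` vertices
satisfies `⌈|E(H)|/(|V(H)|-1)⌉ ≤ a`, i.e. `|E(H)| ≤ a * (|V(H)| - 1)`. -/
def HasArboricity (G : SimpleGraph V) (a : ℕ) : Prop :=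
  ∀ H : G.Subgraph, 2 ≤ H.verts.ncard → H.edgeSet.ncard ≤ a * (H.verts.ncard - 1)

/-- Vertices assigned a layer `≤ i` in the iterative construction of the
`S`-induced `β`-partition. -/
noncomputable def assignedUpTo (G : SimpleGraph V) (S : Set V) (β : ℕ) : ℕ → Set V
  | 0 => {v | v ∈ S ∧ (G.neighborSet v).ncard ≤ β}
  | (i+1) => assignedUpTo G S β i ∪
      {v | v ∈ S ∧ ((G.neighborSet v) \ assignedUpTo G S β i).ncard ≤ β}

/-- The `S`-induced `β`-partition `σ_{S,β} : V → ℕ∞`. -/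
noncomputable def indSigma (G : SimpleGraph V) (S : Set V) (β : ℕ) (v : V) : ℕ∞ :=
  if _h : ∃ i, v ∈ assignedUpTo G S β i then (sInf {i | v ∈ assignedUpTo G S β i} : ℕ) else ⊤

/-- Auxiliary definition of the dependency graph, by fuel on the layer. -/
noncomputable def depAux (G : SimpleGraph V) (σ : V → ℕ∞) : ℕ → V → Set V
  | 0, v => if σ v = 0 then {v} else ∅
  | (n+1), v => if σ v = ((n+1 : ℕ) : ℕ∞)
      then insert v (⋃ w ∈ {w | G.Adj v w ∧ σ w < σ v}, depAux G σ n w)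
      else depAux G σ n v

/-- The dependency graph `D(σ, v)`. -/
noncomputable def depGraph (G : SimpleGraph V) (σ : V → ℕ∞) (v : V) : Set V :=
  depAux G σ (σ v).toNat v

/-- A partial `β`-partition: every node with finite layer has at most `β`
neighbors in equal or higher layers. -/
def IsPartialBetaPartition (G : SimpleGraph V) (β : ℕ) (lam : V → ℕ∞) : Prop :=
  ∀ v, lam v ≠ ⊤ → {w | G.Adj v w ∧ lam v ≤ lam w}.ncard ≤ β

/-!
Let `ℓ(u) = k + 1` (it is not `0`, as `deg u > β`). By the construction of `ℓ`, at most `β`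
neighbours of `u` have `ℓ > k`, whereas `σ(u) > k + 1` and `u ∈ S` force more than `β`
neighbours with `σ > k`. The `β + 1` neighbours in `F` carry the largest `σ`-values, so all
of them have `σ > k`, and by counting one of them, `w`, has `ℓ(w) ≤ k < σ(w)`. Being a
neighbour of `u` in a lower layer, `w` lies in `D(ℓ, u)`.
-/

section InducedPartition

variable {G : SimpleGraph V} {S : Set V} {β : ℕ} {v : V} {i : ℕ}

lemma assignedUpTo_mono : Monotone (assignedUpTo G S β) :=
  monotone_nat_of_le_succ fun _ => Set.subset_union_left

lemma mem_assignedUpTo_iff : v ∈ assignedUpTo G S β i ↔ indSigma G S β v ≤ i := by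
  unfold indSigma
  constructor
  · intro h
    rw [dif_pos ⟨i, h⟩]
    exact_mod_cast Nat.sInf_le h
  · intro h
    by_cases hv : ∃ j, v ∈ assignedUpTo G S β j
    · rw [dif_pos hv] at h
      exact assignedUpTo_mono (Nat.cast_le.mp h) (Nat.sInf_mem hv)
    · rw [dif_neg hv] at h
      exact absurd h (by simp)

lemma neighborSet_diff_assignedUpTo :
    G.neighborSet v \ assignedUpTo G S β i =
      {w ∈ G.neighborSet v | (i : ℕ∞) < indSigma G S β w} := by
  ext w
  simp only [Set.mem_sdiff, Set.mem_ofPred_eq, mem_assignedUpTo_iff, not_le]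

lemma indSigma_ne_zero (hv : β < (G.neighborSet v).ncard) : indSigma G S β v ≠ 0 := by
  intro h0
  have hv0 : v ∈ assignedUpTo G S β 0 := mem_assignedUpTo_iff.mpr h0.le
  exact absurd hv0.2 (not_le.mpr hv)

lemma ncard_neighbors_lt_indSigma_le (hv : indSigma G S β v = i + 1) :
    {w ∈ G.neighborSet v | (i : ℕ∞) < indSigma G S β w}.ncard ≤ β := by
  have hmem : v ∈ assignedUpTo G S β (i + 1) := mem_assignedUpTo_iff.mpr (by simp [hv])
  have hnot : v ∉ assignedUpTo G S β i := by
    rw [mem_assignedUpTo_iff, hv]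
    exact_mod_cast (Nat.lt_succ_self i).not_ge
  rw [← neighborSet_diff_assignedUpTo]
  exact (hmem.resolve_left hnot).2

lemma lt_ncard_neighbors_lt_indSigma (hvS : v ∈ S) (hv : (i + 1 : ℕ∞) < indSigma G S β v) :
    β < {w ∈ G.neighborSet v | (i : ℕ∞) < indSigma G S β w}.ncard := by
  have hnot : v ∉ assignedUpTo G S β (i + 1) := by
    rw [mem_assignedUpTo_iff, not_le]
    exact_mod_cast hv
  rw [← neighborSet_diff_assignedUpTo]
  exact not_le.mp fun h => hnot (Or.inr ⟨hvS, h⟩)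

end InducedPartition

lemma ENat.exists_eq_natCast_add_one {x : ℕ∞} (h0 : x ≠ 0) (htop : x ≠ ⊤) :
    ∃ n : ℕ, x = n + 1 := by
  lift x to ℕ using htop
  obtain ⟨n, rfl⟩ := Nat.exists_eq_succ_of_ne_zero (by exact_mod_cast h0)
  exact ⟨n, by push_cast; rfl⟩

section DependencyGraph

variable {G : SimpleGraph V} {σ : V → ℕ∞}

lemma mem_depAux_self : ∀ {n : ℕ} {v : V}, σ v ≤ n → v ∈ depAux G σ n v
  | 0, v, h => by simp [depAux, nonpos_iff_eq_zero.mp h]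
  | n + 1, v, h => by
    by_cases hv : σ v = ((n + 1 : ℕ) : ℕ∞)
    · simp [depAux, hv]
    · have hle : σ v ≤ n :=
        ENat.lt_natCast_add_one_iff.mp (by push_cast at h hv ⊢; exact lt_of_le_of_ne h hv)
      simpa only [depAux, if_neg hv] using mem_depAux_self hle

lemma mem_depGraph_of_adj {u w : V} (hadj : G.Adj u w) (hlt : σ w < σ u) (hu : σ u ≠ ⊤) :
    w ∈ depGraph G σ u := by
  obtain ⟨n, hn⟩ := ENat.exists_eq_natCast_add_one (ne_bot_of_gt hlt) hu
  have hw : σ w ≤ n := ENat.lt_natCast_add_one_iff.mp (hn ▸ hlt)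
  rw [depGraph, hn, ← Nat.cast_add_one, ENat.toNat_natCast, depAux, if_pos (by simpa using hn)]
  exact Set.mem_insert_of_mem _ (Set.mem_biUnion ⟨hadj, hlt⟩ (mem_depAux_self hw))

end DependencyGraph

lemma forall_lt_of_ncard_le_ncard_lt {α : Type*} [LinearOrder α] {f : V → α} {s F : Set V}
    {a : α} (hs : s.Finite) (hFs : F ⊆ s) (hF : ∀ w ∈ F, ∀ w' ∈ s \ F, f w' ≤ f w)
    (hcard : F.ncard ≤ {w ∈ s | a < f w}.ncard) : ∀ w ∈ F, a < f w := by
  by_cases hsub : {w ∈ s | a < f w} ⊆ F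
  · have heq := Set.eq_of_subset_of_ncard_le hsub hcard (hs.subset hFs)
    intro w hw
    exact (heq ▸ hw : w ∈ {w ∈ s | a < f w}).2
  · obtain ⟨w', ⟨hw's, hw'a⟩, hw'F⟩ := Set.not_subset.mp hsub
    exact fun w hw => hw'a.trans_le (hF w hw w' ⟨hw's, hw'F⟩)

theorem forwarding_lemma_general (G : SimpleGraph V) (β : ℕ)
    (S : Set V) (u : V) (hu : u ∈ S)
    (hdeg : β + 1 ≤ (G.neighborSet u).ncard)
    (hgt : indSigma G Set.univ β u < indSigma G S β u)
    (F : Set V) (hF1 : F ⊆ G.neighborSet u)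
    (hF2 : F.ncard = min ((G.neighborSet u).ncard) (β + 1))
    (hF3 : ∀ w ∈ F, ∀ w' ∈ G.neighborSet u \ F,
      indSigma G S β w' ≤ indSigma G S β w) :
    ∃ w ∈ F, w ∈ depGraph G (indSigma G Set.univ β) u ∧
      indSigma G Set.univ β w < indSigma G S β w := by
  have hfin : (G.neighborSet u).Finite := Set.finite_of_ncard_pos (by omega)
  have hFcard : F.ncard = β + 1 := by rw [hF2, min_eq_right hdeg]
  obtain ⟨k, hℓu⟩ := ENat.exists_eq_natCast_add_one (indSigma_ne_zero (by omega)) hgt.ne_top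
  have hlow := ncard_neighbors_lt_indSigma_le hℓu
  have hhigh := lt_ncard_neighbors_lt_indSigma hu (hℓu ▸ hgt)
  have hFσ : ∀ w ∈ F, (k : ℕ∞) < indSigma G S β w :=
    forall_lt_of_ncard_le_ncard_lt hfin hF1 hF3 (by omega)
  obtain ⟨w, hwF, hwℓ⟩ : ∃ w ∈ F, indSigma G Set.univ β w ≤ k := by
    by_contra! hcon
    have hsub : F ⊆ {w ∈ G.neighborSet u | (k : ℕ∞) < indSigma G Set.univ β w} :=
      fun w hw => ⟨hF1 hw, hcon w hw⟩
    have := (Set.ncard_le_ncard hsub (hfin.subset (Set.sep_subset _ _))).trans hlow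
    omega
  have hwu : indSigma G Set.univ β w < indSigma G Set.univ β u :=
    hℓu ▸ ENat.lt_natCast_add_one_iff.mpr hwℓ
  exact ⟨w, hwF, mem_depGraph_of_adj (hF1 hwF) hwu (by simp [hℓu]), hwℓ.trans_lt (hFσ w hwF)⟩

/-- Forwarding lemma: if `u ∈ S`, `deg(u) ≥ β+1`, and
`σ_{S,β}(u) > ℓ_β(u)`, then any forwarding set `F` (a set of `min{deg(u), β+1}`
neighbors of `u` with the highest `σ`-values) contains a node
`w ∈ D(ℓ_β, u)` with `σ_{S,β}(w) > ℓ_β(w)`. -/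
theorem forwarding_lemma [Fintype V] (G : SimpleGraph V) (β : ℕ) (hβ : 1 ≤ β)
    (S : Set V) (u : V) (hu : u ∈ S)
    (hdeg : β + 1 ≤ (G.neighborSet u).ncard)
    (hgt : indSigma G Set.univ β u < indSigma G S β u)
    (F : Set V) (hF1 : F ⊆ G.neighborSet u)
    (hF2 : F.ncard = min ((G.neighborSet u).ncard) (β + 1))
    (hF3 : ∀ w ∈ F, ∀ w' ∈ G.neighborSet u \ F,
      indSigma G S β w' ≤ indSigma G S β w) :
    ∃ w ∈ F, w ∈ depGraph G (indSigma G Set.univ β) u ∧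
      indSigma G Set.univ β w < indSigma G S β w :=
  forwarding_lemma_general G β S u hu hdeg hgt F hF1 hF2 hF3
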